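/- Define m-linear forms L_m on (ℝ^{2^{m-1}})^m for m ≥ 3 by L_m(x⁽¹⁾,...,x⁽ᵐ⁾) = (x₁⁽¹⁾+x₂⁽¹⁾)T_{m-1}(x⁽²⁾,...,x⁽ᵐ⁾) + (x₁⁽¹⁾-x₂⁽¹⁾)T_{m-1}(B^{2^{m-2}}x⁽²⁾, B^{2^{m-2}}x⁽³⁾, B^{2^{m-3}}x⁽⁴⁾, ..., B²x⁽ᵐ⁾). Then ‖L_m‖ = 2^{m-1} (sup norm over the product of ℓ∞ unit balls). -/

import Mathlib

/-- The iterated mixed `ℓ_{q₁}(ℓ_{q₂}(⋯ℓ_{q_m}))` norm of an `m`-indexed array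
`f` with indices ranging over `{0, ..., N-1}`:
`(Σ_{j₁<N}(⋯(Σ_{j_m<N}|f(j₁,...,j_m)|^{q_m})^{q_{m-1}/q_m}⋯)^{q₁/q₂})^{1/q₁}`. -/
noncomputable def mixedNorm : (m : ℕ) → (N : ℕ) → (ℕ → ℝ) → ((ℕ → ℕ) → ℝ) → ℝ
  | 0, _, _, f => |f fun _ => 0|
  | m + 1, N, q, f =>
      (∑ j : Fin N, (mixedNorm m N (fun i => q (i + 1))
          (fun idx => f (fun i => if i = 0 then (j : ℕ) else idx (i - 1)))) ^ q 0)
        ^ (1 / q 0)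

/-- The `j`-th canonical basis vector of `ℝⁿ` (interpreted as `0` if `j ≥ n`). -/
def eVec (n : ℕ) (j : ℕ) : Fin n → ℝ := fun i => if (i : ℕ) = j then 1 else 0

/-- The supremum norm of an `m`-linear form on `(ℓ∞ⁿ)^m`. -/
noncomputable def supNorm (m n : ℕ)
    (T : MultilinearMap ℝ (fun _ : Fin m => (Fin n → ℝ)) ℝ) : ℝ :=
  sSup {v : ℝ | ∃ x : Fin m → Fin n → ℝ, (∀ i, ‖x i‖ ≤ 1) ∧ v = |T x|}

/-- The shift exponents in the inductive definition of `T_m`. -/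
def Tshift (m k : ℕ) : ℕ := if k ≤ 1 then 2 ^ (m - 1) else 2 ^ (m - k)

/-- The inductively defined `m`-linear forms `T_m` of Diniz et al.:
`T₂(x,y) = x₁y₁ + x₁y₂ + x₂y₁ - x₂y₂` and
`T_{m+1}(x⁽¹⁾,...,x⁽ᵐ⁺¹⁾) = (x₁⁽ᵐ⁺¹⁾+x₂⁽ᵐ⁺¹⁾)T_m(x⁽¹⁾,...,x⁽ᵐ⁾)
  + (x₁⁽ᵐ⁺¹⁾-x₂⁽ᵐ⁺¹⁾)T_m(B^{2^{m-1}}x⁽¹⁾, B^{2^{m-1}}x⁽²⁾, B^{2^{m-2}}x⁽³⁾, ..., B²x⁽ᵐ⁾)`,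
where `B` is the backward shift. The `k`-th argument (0-indexed) is `x k : ℕ → ℝ`. -/
noncomputable def Tform : ℕ → (ℕ → ℕ → ℝ) → ℝ
  | 0, _ => 0
  | 1, x => x 0 0
  | 2, x => x 0 0 * x 1 0 + x 0 0 * x 1 1 + x 0 1 * x 1 0 - x 0 1 * x 1 1
  | m + 3, x =>
      (x (m + 2) 0 + x (m + 2) 1) * Tform (m + 2) x
        + (x (m + 2) 0 - x (m + 2) 1)
            * Tform (m + 2) (fun k j => x k (j + Tshift (m + 2) k))

/-- The shift exponents in the definition of `L_m` (applied to the `k`-th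
argument, 0-indexed, of `T_{m-1}`). -/
def Lshift (m k : ℕ) : ℕ := if k ≤ 1 then 2 ^ (m - 2) else 2 ^ (m - 1 - k)

/-- The `m`-linear forms `L_m` (for `m ≥ 3`):
`L_m(x⁽¹⁾,...,x⁽ᵐ⁾) = (x₁⁽¹⁾+x₂⁽¹⁾)T_{m-1}(x⁽²⁾,...,x⁽ᵐ⁾)
  + (x₁⁽¹⁾-x₂⁽¹⁾)T_{m-1}(B^{2^{m-2}}x⁽²⁾, B^{2^{m-2}}x⁽³⁾, B^{2^{m-3}}x⁽⁴⁾, ..., B²x⁽ᵐ⁾)`. -/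
noncomputable def Lform (m : ℕ) (x : ℕ → ℕ → ℝ) : ℝ :=
  (x 0 0 + x 0 1) * Tform (m - 1) (fun k => x (k + 1))
    + (x 0 0 - x 0 1) * Tform (m - 1) (fun k j => x (k + 1) (j + Lshift m k))

/-!
Every `T_n` and `L_m` has the shape `(a + b) S + (a - b) S'` with `|a|, |b| ≤ 1`, and
`|a + b| + |a - b| = 2 max (|a|, |b|) ≤ 2`, so each level of the recursion at most doubles the
bound: `|T_n| ≤ 2^{n-1}` and `|L_m| ≤ 2^{m-1}` on the unit ball. At the all-ones point every
`a - b` vanishes, so the bound doubles exactly at each level and is attained.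
-/

lemma abs_add_add_abs_sub_le_two {a b : ℝ} (ha : |a| ≤ 1) (hb : |b| ≤ 1) :
    |a + b| + |a - b| ≤ 2 := by
  rw [abs_le] at ha hb
  rcases abs_cases (a + b) with ⟨h₁, _⟩ | ⟨h₁, _⟩ <;>
    rcases abs_cases (a - b) with ⟨h₂, _⟩ | ⟨h₂, _⟩ <;> linarith

lemma abs_add_mul_add_sub_mul_le {a b S S' C : ℝ} (ha : |a| ≤ 1) (hb : |b| ≤ 1)
    (hS : |S| ≤ C) (hS' : |S'| ≤ C) : |(a + b) * S + (a - b) * S'| ≤ 2 * C := by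
  have hC : 0 ≤ C := (abs_nonneg S).trans hS
  calc |(a + b) * S + (a - b) * S'| ≤ |a + b| * |S| + |a - b| * |S'| := by
        rw [← abs_mul, ← abs_mul]; exact abs_add_le _ _
    _ ≤ |a + b| * C + |a - b| * C := by gcongr
    _ = (|a + b| + |a - b|) * C := by ring
    _ ≤ 2 * C := by gcongr; exact abs_add_add_abs_sub_le_two ha hb

/-- `T₂` also fits the recursion, since `T₁(x) = x₁` and `Tshift 1 0 = 1`. -/
lemma Tform_succ {n : ℕ} (hn : 1 ≤ n) (x : ℕ → ℕ → ℝ) :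
    Tform (n + 1) x = (x n 0 + x n 1) * Tform n x
      + (x n 0 - x n 1) * Tform n (fun k j => x k (j + Tshift n k)) := by
  obtain ⟨n, rfl⟩ : ∃ n', n = n' + 1 := ⟨n - 1, by omega⟩
  cases n with
  | zero => simp only [Tform, Tshift]; norm_num; ring
  | succ n => rfl

lemma abs_Tform_succ_le (n : ℕ) {x : ℕ → ℕ → ℝ} (hx : ∀ k j, |x k j| ≤ 1) :
    |Tform (n + 1) x| ≤ 2 ^ n := by
  induction n generalizing x with
  | zero => simpa [Tform] using hx 0 0
  | succ n ih =>
    rw [Tform_succ (by omega), pow_succ']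
    exact abs_add_mul_add_sub_mul_le (hx _ _) (hx _ _) (ih hx) (ih fun k j => hx k _)

lemma Tform_succ_one (n : ℕ) : Tform (n + 1) (fun _ _ => 1) = 2 ^ n := by
  induction n with
  | zero => rfl
  | succ n ih => rw [Tform_succ (by omega), ih, pow_succ']; ring

lemma abs_Lform_le {m : ℕ} (hm : 2 ≤ m) {x : ℕ → ℕ → ℝ} (hx : ∀ k j, |x k j| ≤ 1) :
    |Lform m x| ≤ 2 ^ (m - 1) := by
  obtain ⟨n, rfl⟩ : ∃ n, m = n + 2 := ⟨m - 2, by omega⟩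
  rw [Lform, show n + 2 - 1 = n + 1 by omega, pow_succ']
  exact abs_add_mul_add_sub_mul_le (hx _ _) (hx _ _) (abs_Tform_succ_le n fun _ _ => hx _ _)
    (abs_Tform_succ_le n fun _ _ => hx _ _)

lemma Lform_one {m : ℕ} (hm : 2 ≤ m) : Lform m (fun _ _ => 1) = 2 ^ (m - 1) := by
  obtain ⟨n, rfl⟩ : ∃ n, m = n + 2 := ⟨m - 2, by omega⟩
  rw [Lform, show n + 2 - 1 = n + 1 by omega, Tform_succ_one, pow_succ']
  ring

/-- The supremum norm of `L_m` over the unit ball of `(ℓ∞)^m` equals `2^{m-1}`. -/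
theorem stmt_10 (m : ℕ) (hm : 3 ≤ m) :
    sSup {v : ℝ | ∃ x : ℕ → ℕ → ℝ, (∀ k j, |x k j| ≤ 1) ∧ v = |Lform m x|}
      = 2 ^ (m - 1) := by
  have hm₂ : 2 ≤ m := by omega
  refine IsGreatest.csSup_eq ⟨⟨fun _ _ => 1, fun _ _ => by norm_num, ?_⟩, ?_⟩
  · rw [Lform_one hm₂, abs_of_nonneg (by positivity)]
  · rintro v ⟨x, hx, rfl⟩
    exact abs_Lform_le hm₂ hx
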